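/- The relation R = { (eat∞ (p ⊗ q) α, eat∞ p (eat∞ q α)) | α : A^ω, p : P_B C, q : P_A B } is a stream bisimulation on C^ω: whenever (σ, τ) ∈ R, head σ = head τ and (tail σ, tail τ) ∈ R. -/
import Mathlib


universe u

/-- The initial algebra `T_A B = μX. B + X^A`: wellfounded trees branching over `A`
with leaves labelled in `B`. -/
inductive T (A : Type u) (B : Type u) : Type u
  | Ret : B → T A B
  | Rd : (A → T A B) → T A B

namespace StreamProc

/-- `eat (Ret b) α = (b, α)`, `eat (Rd φ) (a ∷ α) = eat (φ a) α`. -/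
def eat {A B : Type u} : T A B → Stream' A → B × Stream' A
  | .Ret b, α => (b, α)
  | .Rd φ, α => eat (φ α.head) α.tail

/-- `β` and `α` agree on their first `n` entries. -/
def Agree {A : Type u} (n : ℕ) (α β : Stream' A) : Prop :=
  ∀ i < n, α.get i = β.get i

/-- continuity of a discrete-valued function on streams (product topology of
the discrete topology, expressed concretely via prefixes). -/
def ContD {A B : Type u} (f : Stream' A → B) : Prop :=
  ∀ α, ∃ n, ∀ β, Agree n α β → f β = f α

/-- continuity of a stream-valued function on streams. -/
def ContS {A B : Type u} (f : Stream' A → Stream' B) : Prop :=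
  ∀ α n, ∃ m, ∀ β, Agree m α β → Agree n (f α) (f β)

/-- structural recursion (fold) on `T A B`. -/
def tfold {A B C : Type u} (r : B → C) (g : (A → C) → C) : T A B → C
  | .Ret b => r b
  | .Rd φ => g fun a => tfold r g (φ a)

/-- bind of the free (tree) monad `T_A`: grafting at leaves. -/
def tbind {A B C : Type u} : T A B → (B → T A C) → T A C
  | .Ret b, f => f b
  | .Rd φ, f => .Rd fun a => tbind (φ a) f

/-- bind of the state monad `M_A B = A^ω → B × A^ω`. -/
def mbind {A B C : Type u} (m : Stream' A → B × Stream' A)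
    (f : B → Stream' A → C × Stream' A) : Stream' A → C × Stream' A :=
  fun α => f (m α).1 (m α).2

/-- the type of leaf positions of a tree. -/
def LeafPos {A B : Type u} : T A B → Type u
  | .Ret _ => PUnit
  | .Rd φ => Σ a, LeafPos (φ a)

/-- the polynomial functor whose extension is `X ↦ T A (B × X)`. -/
def PF (A B : Type u) : PFunctor.{u} := ⟨T A B, LeafPos⟩

/-- `P_A B = νX. T_A (B × X)`, realised as an M-type. -/
def P (A B : Type u) : Type u := (PF A B).M

/-- repack a shape and leaf-labelling as a tree with decorated leaves. -/
def decorate {A B X : Type u} : (t : T A B) → (LeafPos t → X) → T A (B × X)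
  | .Ret b, f => .Ret (b, f PUnit.unit)
  | .Rd φ, f => .Rd fun a => decorate (φ a) fun l => f ⟨a, l⟩

/-- split a leaf-decorated tree into a shape and a leaf-labelling. -/
def splitT {A B X : Type u} : T A (B × X) → Σ t : T A B, LeafPos t → X
  | .Ret bx => ⟨.Ret bx.1, fun _ => bx.2⟩
  | .Rd φ => ⟨.Rd fun a => (splitT (φ a)).1, fun l => (splitT (φ l.1)).2 l.2⟩

/-- the structure map `out : P_A B → T_A (B × P_A B)` of the final coalgebra. -/
def Pout {A B : Type u} (p : P A B) : T A (B × P A B) :=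
  decorate (PFunctor.M.dest p).1 (PFunctor.M.dest p).2

/-- corecursion (unfold) into the final coalgebra `P_A B`. -/
def Punfold {A B X : Type u} (c : X → T A (B × X)) : X → P A B :=
  PFunctor.M.corec fun x => splitT (c x)

/-- `eat∞ : P_A B → A^ω → B^ω`: if `eat (out p) α = ((b, p'), α')` then
`eat∞ p α = b ∷ eat∞ p' α'`. -/
def eatInf {A B : Type u} (p : P A B) (α : Stream' A) : Stream' B :=
  Stream'.corec (fun s : P A B × Stream' A => (eat (Pout s.1) s.2).1.1)
    (fun s => ((eat (Pout s.1) s.2).1.2, (eat (Pout s.1) s.2).2)) (p, α)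

/-- the `fast-forward` map `ρ`. -/
def rho {A B C : Type u} : T A B → (Stream' A → C) → T A (B × (Stream' A → C))
  | .Ret b, f => .Ret (b, f)
  | .Rd φ, f => .Rd fun a => rho (φ a) fun α => f (Stream'.cons a α)

/-- `rep∞ = unfold (ρ ∘ τ)` where `τ f = (rep (head ∘ f), tail ∘ f)`. -/
def repInf {A B : Type u} (rep : (Stream' A → B) → T A B) :
    (Stream' A → Stream' B) → P A B :=
  Punfold fun f => rho (rep fun α => (f α).head) fun α => (f α).tail

/-- the carrier of the composition coalgebras. -/
def S' (A B C : Type u) : Type u := T B (C × P B C) × T A (B × P A B)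

/-- the `lazy' composition coalgebra `χ`, as a nested structural recursion
(outer fold on the postponent, inner fold on the preponent). -/
def chi {A B C : Type u} : T B (C × P B C) → T A (B × P A B) → T A (C × S' A B C) :=
  tfold
    (fun cp u => .Ret (cp.1, (Pout cp.2, u)))
    (fun f => tfold (fun bq => f bq.1 (Pout bq.2)) .Rd)

/-- the `greedy' composition coalgebra `χ'`. -/
def chi' {A B C : Type u} : T B (C × P B C) → T A (B × P A B) → T A (C × S' A B C) :=
  tfold
    (fun cp => tfold (fun bq => .Ret (cp.1, (Pout cp.2, .Ret bq))) .Rd)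
    (fun f => tfold (fun bq => f bq.1 (Pout bq.2)) .Rd)

/-- lazy composition on representatives (tree level). -/
def otimesT {A B C : Type u} (t : T B (C × P B C)) (u : T A (B × P A B)) : P A C :=
  Punfold (fun s : S' A B C => chi s.1 s.2) (t, u)

/-- lazy composition `⊗ : P_B C × P_A B → P_A C`. -/
def otimes {A B C : Type u} (p : P B C) (q : P A B) : P A C :=
  otimesT (Pout p) (Pout q)

/-- greedy composition on representatives (tree level). -/
def otimesT' {A B C : Type u} (t : T B (C × P B C)) (u : T A (B × P A B)) : P A C :=
  Punfold (fun s : S' A B C => chi' s.1 s.2) (t, u)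

/-- greedy composition `⊗' : P_B C × P_A B → P_A C`. -/
def otimes' {A B C : Type u} (p : P B C) (q : P A B) : P A C :=
  otimesT' (Pout p) (Pout q)

end StreamProc

namespace StreamProc
/-- The relation `R = {(eat∞ (p ⊗ q) α, eat∞ p (eat∞ q α))}`. -/
def Rrel {A B C : Type u} (σ τ : Stream' C) : Prop :=
  ∃ (α : Stream' A) (p : P B C) (q : P A B),
    σ = eatInf (otimes p q) α ∧ τ = eatInf p (eatInf q α)

/-- map on leaf decorations -/
def Tmap {A C X Y : Type u} (f : X → Y) : T A (C × X) → T A (C × Y)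
  | .Ret cx => .Ret (cx.1, f cx.2)
  | .Rd φ => .Rd fun a => Tmap f (φ a)

lemma decorate_splitT {A B X Y : Type u} (f : X → Y) (t : T A (B × X)) :
    decorate (splitT t).1 (fun l => f ((splitT t).2 l)) = Tmap f t := by
  induction t with
  | Ret bx => rfl
  | Rd φ ih => simp only [splitT, decorate, Tmap]; exact congrArg _ (funext fun a => ih a)

lemma Pout_Punfold {A B X : Type u} (c : X → T A (B × X)) (x : X) :
    Pout (Punfold c x) = Tmap (Punfold c) (c x) := by
  have h : PFunctor.M.dest (Punfold c x)
      = (PF A B).map (Punfold c) (splitT (c x)) :=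
    PFunctor.M.dest_corec _ _
  show decorate (PFunctor.M.dest (Punfold c x)).1 (PFunctor.M.dest (Punfold c x)).2
      = Tmap (Punfold c) (c x)
  rw [h]
  exact decorate_splitT (Punfold c) (c x)

lemma eat_Tmap {A C X Y : Type u} (f : X → Y) (t : T A (C × X)) (α : Stream' A) :
    eat (Tmap f t) α = (((eat t α).1.1, f (eat t α).1.2), (eat t α).2) := by
  induction t generalizing α with
  | Ret cx => rfl
  | Rd φ ih => simp only [Tmap, eat]; exact ih _ _

lemma eat_tbind {A B C : Type u} (u : T A B) (g : B → T A C) (α : Stream' A) :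
    eat (tbind u g) α = eat (g (eat u α).1) (eat u α).2 := by
  induction u generalizing α with
  | Ret b => rfl
  | Rd φ ih => simp only [tbind, eat]; exact ih _ _

lemma chi_Rd {A B C : Type u} (φ : B → T B (C × P B C)) (u : T A (B × P A B)) :
    chi (.Rd φ) u = tbind u (fun bq => chi (φ bq.1) (Pout bq.2)) := by
  induction u with
  | Ret bq => rfl
  | Rd ψ ih => simp only [chi, tfold, tbind] at *; exact congrArg _ (funext fun a => ih a)

lemma eatInf_eq {A B : Type u} (p : P A B) (α : Stream' A) :
    eatInf p α = Stream'.cons (eat (Pout p) α).1.1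
      (eatInf (eat (Pout p) α).1.2 (eat (Pout p) α).2) :=
  Stream'.corec_eq _ _ _

lemma key {A B C : Type u} (t : T B (C × P B C)) (q : P A B) (α : Stream' A) :
    ∃ (c : C) (p' : P B C) (q' : P A B) (α' : Stream' A),
      eat (chi t (Pout q)) α = ((c, (Pout p', Pout q')), α') ∧
      eat t (eatInf q α) = ((c, p'), eatInf q' α') := by
  induction t generalizing q α with
  | Ret cp =>
    exact ⟨cp.1, cp.2, q, α, rfl, rfl⟩
  | Rd φ ih =>
    obtain ⟨c, p', q', α', h1, h2⟩ := ih (eat (Pout q) α).1.1 (eat (Pout q) α).1.2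
      (eat (Pout q) α).2
    refine ⟨c, p', q', α', ?_, ?_⟩
    · rw [chi_Rd, eat_tbind]; exact h1
    · rw [eatInf_eq q α]
      show eat (φ _) _ = _
      simpa using h2

/-- `R` is a stream bisimulation on `C^ω`: related streams have equal heads and
related tails. -/
theorem stmt19 {A B C : Type u} (σ τ : Stream' C)
    (h : Rrel (A := A) (B := B) σ τ) :
    σ.head = τ.head ∧ Rrel (A := A) (B := B) σ.tail τ.tail := by
  obtain ⟨α, p, q, hσ, hτ⟩ := h
  obtain ⟨c, p', q', α', h1, h2⟩ := key (Pout p) q α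
  have hout : Pout (otimes p q)
      = Tmap (Punfold fun s : S' A B C => chi s.1 s.2) (chi (Pout p) (Pout q)) :=
    Pout_Punfold _ _
  have heat : eat (Pout (otimes p q)) α = ((c, otimes p' q'), α') := by
    rw [hout, eat_Tmap, h1]; rfl
  have hσ' : σ = Stream'.cons c (eatInf (otimes p' q') α') := by
    rw [hσ, eatInf_eq, heat]
  have hτ' : τ = Stream'.cons c (eatInf p' (eatInf q' α')) := by
    rw [hτ, eatInf_eq p (eatInf q α), h2]
  subst hσ' hτ'
  exact ⟨rfl, α', p', q', rfl, rfl⟩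

end StreamProc
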